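/- Let N ≥ 4 be an integer divisible by 4. For every integer n with 0 ≤ n ≤ N/2 − 1, one has ∑_{s=1}^{N/4} [(4n/N − 1) + cos(2πn(2s−1)/N)] / sin²((2s−1)π/N) = 0. -/

import Mathlib

/-!
Write `t_s = (2s - 1)π/N` and let `S(x) = ∑ₛ ((4x/N - 1) + cos (2x t_s)) / sin² t_s`.
The identity `cos (c + 2t) + cos (c - 2t) = 2 cos c - 4 sin² t cos c` cancels the denominators in
the second difference of `S`, so `S(x + 1) - 2 S(x) + S(x - 1) = -4 ∑ₛ cos (2x t_s)`, and this sum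
of cosines telescopes to `sin (k π) / (2 sin (2π k / N)) = 0` at every integer `0 < x = k < N/2`.
Hence `S` is an arithmetic progression on `0, 1, …, N/2`; as `S(0) = S(N/2) = 0`, it vanishes there.
-/

open Real Finset

theorem eq_nsmul_of_sub_eq_sub {M : Type*} [AddCommGroup M] {a : ℕ → M} {K : ℕ} (h0 : a 0 = 0)
    (h : ∀ j, j + 2 ≤ K → a (j + 2) - a (j + 1) = a (j + 1) - a j) :
    ∀ j ≤ K, a j = j • a 1 := by
  intro j
  induction j using Nat.twoStepInduction with
  | zero => simp [h0]
  | one => simp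
  | more j ih₀ ih₁ =>
    intro hj
    rw [sub_eq_iff_eq_add.mp (h j hj), ih₁ (by omega), ih₀ (by omega)]
    module

theorem eq_zero_of_sub_eq_sub {M : Type*} [AddCommGroup M] [IsAddTorsionFree M] {a : ℕ → M}
    {K : ℕ} (h0 : a 0 = 0) (hK : a K = 0)
    (h : ∀ j, j + 2 ≤ K → a (j + 2) - a (j + 1) = a (j + 1) - a j) :
    ∀ j ≤ K, a j = 0 := by
  have hlin := eq_nsmul_of_sub_eq_sub h0 h
  rcases Nat.eq_zero_or_pos K with rfl | hKpos
  · intro j hj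
    rwa [Nat.le_zero.mp hj]
  · have h1 : a 1 = 0 := by
      rw [hlin K le_rfl] at hK
      exact (nsmul_eq_zero_iff_right hKpos.ne').mp hK
    intro j hj
    rw [hlin j hj, h1, smul_zero]

theorem two_mul_sin_mul_sum_cos_odd_mul (θ : ℝ) (m : ℕ) :
    2 * sin θ * ∑ s ∈ Icc 1 m, cos ((2 * s - 1) * θ) = sin (2 * m * θ) := by
  induction m with
  | zero => simp
  | succ m ih =>
    rw [sum_Icc_succ_top (by omega), mul_add, ih, two_mul_sin_mul_cos]
    push_cast
    rw [show θ - (2 * (m + 1) - 1) * θ = -(2 * m * θ) by ring, sin_neg]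
    ring_nf

theorem sum_cos_odd_mul_eq_zero {N : ℕ} (hN : 4 ∣ N) {k : ℕ} (hk₀ : 0 < k) (hk : k < N / 2) :
    ∑ s ∈ Icc 1 (N / 4), cos ((2 * s - 1) * (2 * π * k / N)) = 0 := by
  have hN' : (N : ℝ) = 4 * (N / 4 : ℕ) := by exact_mod_cast (Nat.mul_div_cancel' hN).symm
  have hm : ((N / 4 : ℕ) : ℝ) ≠ 0 := by exact_mod_cast (by omega : N / 4 ≠ 0)
  have hk₀' : (0 : ℝ) < k := by exact_mod_cast hk₀
  have hkN : 2 * (k : ℝ) < N := by exact_mod_cast (by omega : 2 * k < N)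
  have hsin : sin (2 * π * k / N) ≠ 0 := by
    refine (sin_pos_of_pos_of_lt_pi (div_pos (by positivity) (by linarith)) ?_).ne'
    rw [div_lt_iff₀ (by linarith)]
    nlinarith [pi_pos]
  have htel := two_mul_sin_mul_sum_cos_odd_mul (2 * π * k / N) (N / 4)
  rw [show 2 * ((N / 4 : ℕ) : ℝ) * (2 * π * k / N) = k * π by rw [hN']; field_simp; ring,
    sin_nat_mul_pi] at htel
  exact (mul_eq_zero.mp htel).resolve_left (mul_ne_zero two_ne_zero hsin)

theorem cos_add_add_cos_sub (x y : ℝ) :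
    cos (x + 2 * y) + cos (x - 2 * y) = 2 * cos x - 4 * sin y ^ 2 * cos x := by
  rw [cos_add_cos, show (x + 2 * y + (x - 2 * y)) / 2 = x by ring,
    show (x + 2 * y - (x - 2 * y)) / 2 = 2 * y by ring, cos_two_mul', cos_sq']
  ring

theorem sin_odd_mul_pi_div_ne_zero {N s : ℕ} (hs : s ∈ Icc 1 (N / 4)) :
    sin ((2 * (s : ℝ) - 1) * π / N) ≠ 0 := by
  obtain ⟨hs₁, hs₂⟩ := mem_Icc.mp hs
  have h₁ : (1 : ℝ) ≤ s := by exact_mod_cast hs₁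
  have h₂ : 2 * (s : ℝ) < N + 1 := by exact_mod_cast (by omega : 2 * s < N + 1)
  refine (sin_pos_of_pos_of_lt_pi (div_pos (mul_pos (by linarith) pi_pos) (by linarith)) ?_).ne'
  rw [div_lt_iff₀ (by linarith)]
  nlinarith [pi_pos]

noncomputable def cscSqSum (N : ℕ) (x : ℝ) : ℝ :=
  ∑ s ∈ Icc 1 (N / 4),
    ((4 * x / N - 1) + cos (2 * π * x * (2 * (s : ℝ) - 1) / N)) / sin ((2 * (s : ℝ) - 1) * π / N) ^ 2

theorem cscSqSum_zero (N : ℕ) : cscSqSum N 0 = 0 := by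
  simp [cscSqSum]

theorem cscSqSum_half (N : ℕ) : cscSqSum N (N / 2) = 0 := by
  rcases Nat.eq_zero_or_pos N with rfl | hN
  · simp [cscSqSum]
  refine sum_eq_zero fun s _ => ?_
  have harg : 2 * π * (N / 2) * (2 * (s : ℝ) - 1) / N = s * (2 * π) - π := by
    field_simp
  rw [harg, cos_sub_pi, cos_nat_mul_two_pi]
  field_simp
  norm_num

theorem cscSqSum_add_one_add_cscSqSum_sub_one (N : ℕ) (x : ℝ) :
    cscSqSum N (x + 1) + cscSqSum N (x - 1) =
      2 * cscSqSum N x - 4 * ∑ s ∈ Icc 1 (N / 4), cos ((2 * s - 1) * (2 * π * x / N)) := by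
  simp only [cscSqSum, ← sum_add_distrib, mul_sum, ← sum_sub_distrib]
  refine sum_congr rfl fun s hs => ?_
  set t := (2 * (s : ℝ) - 1) * π / N
  set c := 2 * π * x * (2 * (s : ℝ) - 1) / N
  have ht : sin t ≠ 0 := sin_odd_mul_pi_div_ne_zero hs
  rw [show 2 * π * (x + 1) * (2 * (s : ℝ) - 1) / N = c + 2 * t by ring,
    show 2 * π * (x - 1) * (2 * (s : ℝ) - 1) / N = c - 2 * t by ring,
    show (2 * (s : ℝ) - 1) * (2 * π * x / N) = c by ring, ← add_div,
    add_add_add_comm, cos_add_add_cos_sub]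
  field_simp
  ring

theorem cscSqSum_natCast_sub_eq_sub {N : ℕ} (hN : 4 ∣ N) {j : ℕ} (hj : j + 2 ≤ N / 2) :
    cscSqSum N (j + 2 : ℕ) - cscSqSum N (j + 1 : ℕ) = cscSqSum N (j + 1 : ℕ) - cscSqSum N j := by
  have h := cscSqSum_add_one_add_cscSqSum_sub_one N (j + 1 : ℕ)
  rw [sum_cos_odd_mul_eq_zero hN j.succ_pos (by omega)] at h
  push_cast at h ⊢
  rw [add_sub_cancel_right, show (j : ℝ) + 1 + 1 = j + 2 by ring] at h
  linarith

theorem sum_identity_odd_relation (N : ℕ) (hN4 : 4 ∣ N)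
    (n : ℕ) (hn : n ≤ N / 2 - 1) :
    ∑ s ∈ Finset.Icc 1 (N / 4),
        ((4 * (n : ℝ) / N - 1) + Real.cos (2 * Real.pi * n * (2 * (s : ℝ) - 1) / N)) /
          Real.sin ((2 * (s : ℝ) - 1) * Real.pi / N) ^ 2
      = 0 := by
  have h0 : cscSqSum N (0 : ℕ) = 0 := by exact_mod_cast cscSqSum_zero N
  have hK : cscSqSum N (N / 2 : ℕ) = 0 := by
    rw [Nat.cast_div_charZero (dvd_trans (by norm_num) hN4)]
    exact cscSqSum_half N
  exact eq_zero_of_sub_eq_sub (a := fun j : ℕ => cscSqSum N j) h0 hK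
    (fun _ hj => cscSqSum_natCast_sub_eq_sub hN4 hj) n (by omega)
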